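/- Let Y ∈ ℝ^{d×N}, D ∈ ℝ^{d×K} be fixed, and define h : ℝ^{K×N} → ℝ by h(X) = (1/2)( ‖Y − DX‖_F² + Σ_{c=1}^C ( ‖(Y − D W_c X)P_c‖_F² + Σ_{j≠c} ‖D W_j X P_c‖_F² ) ). Then h is differentiable and its gradient with respect to the Frobenius inner product at X equals (DᵀD + Σ_{j=1}^C W_j DᵀD W_j)·X − (DᵀY + Σ_{c=1}^C W_c Dᵀ Y P_c), i.e., ∇h(X) = M(DᵀD)X − M(DᵀY), where M(·) denotes doubling of the diagonal blocks determined by the class selectors. -/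

import Mathlib

open Matrix Finset

attribute [local instance] Matrix.normedAddCommGroup Matrix.normedSpace

/-- Squared Frobenius norm: `‖A‖_F² = trace (A * Aᵀ)`. -/
noncomputable def frobSq {m n : Type*} [Fintype m] [Fintype n] (A : Matrix m n ℝ) : ℝ :=
  Matrix.trace (A * Aᵀ)

/-- Diagonal 0/1 selector matrix for class `j` determined by a labeling `cl`. -/
noncomputable def sel {K C : ℕ} (cl : Fin K → Fin C) (j : Fin C) :
    Matrix (Fin K) (Fin K) ℝ :=
  Matrix.diagonal fun i => if cl i = j then (1 : ℝ) else 0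

/-- The continuous linear functional `H ↦ ⟨G, H⟩_F = trace (G * Hᵀ)` given by pairing with `G`
in the Frobenius inner product. -/
noncomputable def frobCLM {m n : Type*} [Fintype m] [Fintype n]
    (G : Matrix m n ℝ) : Matrix m n ℝ →L[ℝ] ℝ :=
  LinearMap.toContinuousLinearMap
  { toFun := fun H => Matrix.trace (G * Hᵀ)
    map_add' := fun H₁ H₂ => by simp [Matrix.transpose_add, Matrix.mul_add]
    map_smul' := fun r H => by simp [Matrix.transpose_smul, Matrix.mul_smul] }

/-! Each summand of `h` is `‖A X B + E‖_F²` for an affine map of `X`, whose Frobenius gradient is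
`2 Aᵀ (A X B + E) Bᵀ` since `⟨G, A H B⟩ = ⟨Aᵀ G Bᵀ, H⟩`. As `P_c` is a symmetric projection and
the `W_j` are symmetric, the class-`c` summands contribute `2 (Σ_j W_j DᵀD W_j X − W_c DᵀY) P_c`,
and summing over `c` with `Σ_c P_c = 1`, then adding the gradient `2 (DᵀD X − DᵀY)` of the first
summand, gives twice `M(DᵀD) X − M(DᵀY)`. -/

section Frobenius

variable {m n k p : Type*} [Fintype n] [Fintype k]

noncomputable def mulLeftRightCLM (A : Matrix m k ℝ) (B : Matrix n p ℝ) :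
    Matrix k n ℝ →L[ℝ] Matrix m p ℝ :=
  LinearMap.toContinuousLinearMap
  { toFun X := A * X * B
    map_add' X₁ X₂ := by simp [Matrix.mul_add, Matrix.add_mul]
    map_smul' r X := by simp }

@[simp]
lemma mulLeftRightCLM_apply (A : Matrix m k ℝ) (B : Matrix n p ℝ) (X : Matrix k n ℝ) :
    mulLeftRightCLM A B X = A * X * B := rfl

variable [Fintype m] [Fintype p]

@[simp]
lemma frobCLM_apply (G H : Matrix m n ℝ) : frobCLM G H = trace (G * Hᵀ) := rfl

variable (m n) in
noncomputable def frobPairing : Matrix m n ℝ →L[ℝ] Matrix m n ℝ →L[ℝ] ℝ :=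
  LinearMap.toContinuousLinearMap
  { toFun := frobCLM
    map_add' G₁ G₂ := by ext H; simp [Matrix.add_mul]
    map_smul' r G := by ext H; simp }

lemma frobCLM_comp_mulLeftRightCLM (G : Matrix m p ℝ) (A : Matrix m k ℝ) (B : Matrix n p ℝ) :
    (frobCLM G).comp (mulLeftRightCLM A B) = frobCLM (Aᵀ * G * Bᵀ) := by
  ext H
  simp only [ContinuousLinearMap.comp_apply, mulLeftRightCLM_apply, frobCLM_apply, transpose_mul,
    Matrix.mul_assoc]
  rw [trace_mul_comm Aᵀ]
  simp only [Matrix.mul_assoc]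

def HasFrobGradientAt (f : Matrix m n ℝ → ℝ) (G X : Matrix m n ℝ) : Prop :=
  HasFDerivAt f (frobCLM G) X

namespace HasFrobGradientAt

variable {f g : Matrix m n ℝ → ℝ} {G₁ G₂ X : Matrix m n ℝ}

lemma add (hf : HasFrobGradientAt f G₁ X) (hg : HasFrobGradientAt g G₂ X) :
    HasFrobGradientAt (fun X => f X + g X) (G₁ + G₂) X :=
  (HasFDerivAt.add hf hg).congr_fderiv (map_add (frobPairing m n) G₁ G₂).symm

lemma const_mul (hf : HasFrobGradientAt f G₁ X) (r : ℝ) :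
    HasFrobGradientAt (fun X => r * f X) (r • G₁) X :=
  (HasFDerivAt.const_mul hf r).congr_fderiv (map_smul (frobPairing m n) r G₁).symm

lemma sum {ι : Type*} {s : Finset ι} {f : ι → Matrix m n ℝ → ℝ} {G : ι → Matrix m n ℝ}
    (hf : ∀ i ∈ s, HasFrobGradientAt (f i) (G i) X) :
    HasFrobGradientAt (fun X => ∑ i ∈ s, f i X) (∑ i ∈ s, G i) X :=
  (HasFDerivAt.fun_sum hf).congr_fderiv (map_sum (frobPairing m n) G s).symm

end HasFrobGradientAt

lemma hasFrobGradientAt_frobSq (Z : Matrix m n ℝ) : HasFrobGradientAt frobSq ((2 : ℝ) • Z) Z := by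
  refine ((frobPairing m n).hasFDerivAt_of_bilinear (hasFDerivAt_id Z)
    (hasFDerivAt_id Z)).congr_fderiv ?_
  ext H
  show trace (Z * Hᵀ) + trace (H * Zᵀ) = trace ((2 : ℝ) • Z * Hᵀ)
  rw [← trace_transpose (H * Zᵀ), transpose_mul, transpose_transpose, smul_mul, trace_smul,
    two_smul]

lemma hasFrobGradientAt_frobSq_of_affine {F : Matrix k n ℝ → Matrix m p ℝ} (A : Matrix m k ℝ)
    (B : Matrix n p ℝ) (E : Matrix m p ℝ) (hF : ∀ X, F X = A * X * B + E) (X : Matrix k n ℝ) :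
    HasFrobGradientAt (fun X => frobSq (F X)) ((2 : ℝ) • (Aᵀ * F X * Bᵀ)) X := by
  have hF' : HasFDerivAt F (mulLeftRightCLM A B) X := by
    rw [show F = fun X => mulLeftRightCLM A B X + E from funext hF]
    exact (mulLeftRightCLM A B).hasFDerivAt.add_const E
  refine ((hasFrobGradientAt_frobSq (F X)).comp X hF').congr_fderiv ?_
  exact (frobCLM_comp_mulLeftRightCLM _ A B).trans (by rw [Matrix.mul_smul, Matrix.smul_mul])

end Frobenius

section Selector

variable {K C : ℕ} (cl : Fin K → Fin C)

lemma sel_transpose (j : Fin C) : (sel cl j)ᵀ = sel cl j := by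
  simp [sel]

lemma sel_mul_self (j : Fin C) : sel cl j * sel cl j = sel cl j := by
  simp only [sel, diagonal_mul_diagonal]
  congr 1
  ext i
  split_ifs <;> simp

lemma sum_sel : ∑ j, sel cl j = 1 := by
  ext i i'
  by_cases h : i = i' <;> simp [sel, Matrix.sum_apply, one_apply, h]

end Selector

section Fidelity

variable {m n k ι : Type*} [Fintype m] [Fintype n] [Fintype k] [Fintype ι] [DecidableEq ι]

lemma hasFrobGradientAt_frobSq_sub_mul (Y : Matrix m n ℝ) (D : Matrix m k ℝ) (X : Matrix k n ℝ) :
    HasFrobGradientAt (fun X => frobSq (Y - D * X)) ((2 : ℝ) • (Dᵀ * D * X - Dᵀ * Y)) X := by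
  classical
  convert hasFrobGradientAt_frobSq_of_affine (F := fun X => Y - D * X) (-D) 1 Y
    (fun X => by rw [Matrix.mul_one, Matrix.neg_mul, neg_add_eq_sub]) X using 2
  rw [transpose_one, Matrix.mul_one, transpose_neg, Matrix.neg_mul, Matrix.mul_sub, neg_sub,
    Matrix.mul_assoc]

lemma hasFrobGradientAt_classFidelity (Y : Matrix m n ℝ) (D : Matrix m k ℝ) (W : ι → Matrix k k ℝ)
    (P : Matrix n n ℝ) (hW : ∀ j, (W j)ᵀ = W j) (hPt : Pᵀ = P) (hPP : P * P = P) (c : ι)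
    (X : Matrix k n ℝ) :
    HasFrobGradientAt
      (fun X => frobSq ((Y - D * W c * X) * P) + ∑ j ∈ univ.erase c, frobSq (D * W j * X * P))
      ((2 : ℝ) • ((∑ j, W j * (Dᵀ * D) * W j) * X * P - W c * (Dᵀ * Y) * P)) X := by
  have hOwn_grad : (-(D * W c))ᵀ * ((Y - D * W c * X) * P) * Pᵀ
      = W c * (Dᵀ * D) * W c * X * P - W c * (Dᵀ * Y) * P := by
    simp only [transpose_neg, transpose_mul, hW, hPt, Matrix.neg_mul, Matrix.sub_mul,
      Matrix.mul_sub, Matrix.mul_assoc, hPP, sub_neg_eq_add, neg_add_eq_sub]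
  have hOther_grad (j : ι) :
      (D * W j)ᵀ * (D * W j * X * P) * Pᵀ = W j * (Dᵀ * D) * W j * X * P := by
    simp only [transpose_mul, hW, hPt, Matrix.mul_assoc, hPP]
  have hOwn := hasFrobGradientAt_frobSq_of_affine (F := fun X => (Y - D * W c * X) * P)
    (-(D * W c)) P (Y * P)
    (fun X => by rw [Matrix.sub_mul, Matrix.neg_mul, Matrix.neg_mul, neg_add_eq_sub]) X
  have hOther (j : ι) := hasFrobGradientAt_frobSq_of_affine (F := fun X => D * W j * X * P)
    (D * W j) P 0 (fun X => (add_zero _).symm) X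
  simp only [hOwn_grad] at hOwn
  simp only [hOther_grad] at hOther
  convert hOwn.add (HasFrobGradientAt.sum fun j _ => hOther j) using 1
  rw [← smul_sum, ← smul_add, Matrix.sum_mul, Matrix.sum_mul, ← add_sum_erase _ _ (mem_univ c)]
  congr 1
  abel

end Fidelity

/-- The FDDL fidelity `h(X) = ½(‖Y−DX‖² + Σ_c (‖(Y−D W_c X)P_c‖² + Σ_{j≠c}‖D W_j X P_c‖²))`
is differentiable in `X`, with gradient (w.r.t. the Frobenius inner product)
`M(DᵀD)·X − M(DᵀY) = (DᵀD + Σ_j W_j DᵀD W_j)X − (DᵀY + Σ_c W_c DᵀY P_c)`. -/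
theorem stmt2 {d N K C : ℕ}
    (Y : Matrix (Fin d) (Fin N) ℝ) (D : Matrix (Fin d) (Fin K) ℝ)
    (cl : Fin K → Fin C) (lab : Fin N → Fin C)
    (W : Fin C → Matrix (Fin K) (Fin K) ℝ) (hW : W = sel cl)
    (P : Fin C → Matrix (Fin N) (Fin N) ℝ) (hP : P = sel lab)
    (h : Matrix (Fin K) (Fin N) ℝ → ℝ)
    (hh : ∀ X : Matrix (Fin K) (Fin N) ℝ,
      h X = (1/2) * (frobSq (Y - D * X) +
        ∑ c : Fin C, (frobSq ((Y - D * W c * X) * P c) +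
          ∑ j ∈ Finset.univ.erase c, frobSq (D * W j * X * P c))))
    (X : Matrix (Fin K) (Fin N) ℝ) :
    HasFDerivAt h
      (frobCLM ((Dᵀ * D + ∑ j : Fin C, W j * (Dᵀ * D) * W j) * X
        - (Dᵀ * Y + ∑ c : Fin C, W c * (Dᵀ * Y) * P c))) X := by
  subst hW hP
  rw [show h = _ from funext hh]
  show HasFrobGradientAt _ _ X
  have hClass (c : Fin C) := hasFrobGradientAt_classFidelity Y D (sel cl) (sel lab c)
    (sel_transpose cl) (sel_transpose lab c) (sel_mul_self lab c) c X
  convert ((hasFrobGradientAt_frobSq_sub_mul Y D X).add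
    (HasFrobGradientAt.sum fun c _ => hClass c)).const_mul (1 / 2) using 2
  rw [← smul_sum, ← smul_add, smul_smul, one_div, inv_mul_cancel₀ two_ne_zero, one_smul,
    sum_sub_distrib, ← Matrix.mul_sum, sum_sel, Matrix.mul_one, Matrix.add_mul]
  abel
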